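/- Let Π₀ be a projector of rank at most 2^λ on an m-qubit space, Π₁ = PΠ₀P, and p = ‖Π₀ + Π₁‖ the operator norm. Then Pr_{P ← P_m}[p ≥ 1 + 3·2^{−(m−4λ)/3}] ≤ 2^{−(m−4λ)/3}. -/

import Mathlib

open scoped BigOperators Classical
open Matrix

/-! For a unit vector `ψ`, put `u = Π₀ψ`, `v = Π₁ψ` and `s = ⟪ψ, (Π₀ + Π₁)ψ⟫ = ‖u‖² + ‖v‖²`.
Cauchy–Schwarz gives `s ≤ ‖u + v‖`, while `‖u + v‖² = s + 2 Re ⟪ψ, Π₀Π₁ψ⟫ ≤ s + 2 ‖Π₀Π₁‖_F`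
and `‖Π₀Π₁‖_F² = tr (Π₀Π₁)`; hence `s ≤ 1 + 2 √(tr Π₀Π₁)`.
Summing `P M P†` over all `4^m` Paulis gives `2^m tr M • 1` (orthogonality of the characters
`b ↦ (-1)^{b·v}`), so `∑_P tr (Π₀ P Π₀ P†) = 2^m (tr Π₀)² ≤ 2^m 4^λ`. Markov's inequality at the
threshold `ε²`, `ε = 2^{-(m-4λ)/3}`, bounds the fraction of bad Paulis by `2^m 4^λ / (4^m ε²) ≤ ε`.
-/

/-- The `m`-qubit Pauli operator `X^a Z^b`: `(X^a Z^b)|j⟩ = (-1)^{b·j} |j ⊕ a⟩`. -/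
noncomputable def pauli (m : ℕ) (a b : Fin m → ZMod 2) :
    Matrix (Fin m → ZMod 2) (Fin m → ZMod 2) ℂ :=
  Matrix.of fun i j => if i = j + a then (-1 : ℂ) ^ (∑ k, (b k * j k).val) else 0

section Walsh

variable {ι : Type*} [Fintype ι]

noncomputable def walsh (b v : ι → ZMod 2) : ℂ := (-1) ^ ∑ k, (b k * v k).val

lemma walsh_mul_self (b v : ι → ZMod 2) : walsh b v * walsh b v = 1 := by
  rw [walsh, ← pow_add, ← two_mul, pow_mul, neg_one_sq, one_pow]

lemma conj_walsh (b v : ι → ZMod 2) : starRingEnd ℂ (walsh b v) = walsh b v := by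
  simp [walsh]

lemma sum_walsh_mul_walsh [DecidableEq ι] (u w : ι → ZMod 2) :
    ∑ b, walsh b u * walsh b w = if u = w then 2 ^ Fintype.card ι else 0 := by
  have hcoord (s t : ZMod 2) :
      ∑ x : ZMod 2, (-1 : ℂ) ^ (x * s).val * (-1) ^ (x * t).val = if s = t then 2 else 0 := by
    rw [show ∀ f : ZMod 2 → ℂ, ∑ x, f x = f 0 + f 1 from Fin.sum_univ_two]
    obtain rfl | rfl : s = 0 ∨ s = 1 := (by decide +revert)
    <;> obtain rfl | rfl : t = 0 ∨ t = 1 := (by decide +revert)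
    <;> simp [ZMod.val_one] <;> norm_num
  simp_rw [walsh, ← Finset.prod_pow_eq_pow_sum, ← Finset.prod_mul_distrib]
  rw [← Fintype.prod_sum (fun k x => (-1 : ℂ) ^ (x * u k).val * (-1) ^ (x * w k).val)]
  simp_rw [hcoord, Fintype.prod_ite_zero, Finset.prod_const, funext_iff]
  rfl

end Walsh

lemma eq_add_iff_eq_add_of_zmod_two {ι : Type*} {a i j : ι → ZMod 2} : i = j + a ↔ j = i + a := by
  rw [← sub_eq_iff_eq_add, sub_eq_add_neg, eq_comm,
    show -a = a from funext fun k => ZMod.neg_eq_self_mod_two (a k)]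

section StarProjection

open RCLike

variable {𝕜 E : Type*} [RCLike 𝕜] [NormedAddCommGroup E] [InnerProductSpace 𝕜 E] [CompleteSpace E]
  {p q : E →L[𝕜] E}

lemma IsStarProjection.inner_apply_left (hp : IsStarProjection p) (x y : E) :
    inner 𝕜 (p x) y = inner 𝕜 x (p y) :=
  hp.isSelfAdjoint.isSymmetric x y

lemma IsStarProjection.inner_apply_self (hp : IsStarProjection p) (x : E) :
    inner 𝕜 x (p x) = inner 𝕜 (p x) (p x) := by
  rw [hp.inner_apply_left]
  exact congrArg (inner 𝕜 x) (DFunLike.congr_fun hp.isIdempotentElem x).symm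

lemma IsStarProjection.re_inner_add_apply_le (hp : IsStarProjection p) (hq : IsStarProjection q)
    {x : E} (hx : ‖x‖ = 1) : re (inner 𝕜 x ((p + q) x)) ≤ 1 + 2 * ‖p (q x)‖ := by
  have hs : re (inner 𝕜 x ((p + q) x)) = ‖p x‖ ^ 2 + ‖q x‖ ^ 2 := by
    rw [_root_.add_apply, inner_add_right, map_add, hp.inner_apply_self,
      hq.inner_apply_self, inner_self_eq_norm_sq, inner_self_eq_norm_sq]
  have hs_le : re (inner 𝕜 x ((p + q) x)) ≤ ‖p x + q x‖ := by
    simpa [hx] using re_inner_le_norm x ((p + q) x)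
  have hcross : re (inner 𝕜 (p x) (q x)) ≤ ‖p (q x)‖ := by
    simpa [hp.inner_apply_left, hx] using re_inner_le_norm x (p (q x))
  have hsq : ‖p x + q x‖ ^ 2 ≤ ‖p x‖ ^ 2 + ‖q x‖ ^ 2 + 2 * ‖p (q x)‖ := by
    rw [norm_add_sq (𝕜 := 𝕜)]; linarith
  nlinarith [norm_nonneg (p (q x)), sq_nonneg ‖p x‖, sq_nonneg ‖q x‖]

end StarProjection

section MatrixTrace

open RCLike

variable {𝕜 : Type*} [RCLike 𝕜] {m n : Type*} [Fintype m] [Fintype n]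

lemma Matrix.re_trace_mul_conjTranspose (A : Matrix m n 𝕜) :
    re (trace (A * Aᴴ)) = ∑ i, ∑ j, ‖A i j‖ ^ 2 := by
  simp [trace, mul_apply, RCLike.mul_conj]

lemma Matrix.sum_norm_mulVec_sq_le (A : Matrix m n 𝕜) (v : n → 𝕜) :
    ∑ i, ‖(A *ᵥ v) i‖ ^ 2 ≤ re (trace (A * Aᴴ)) * ∑ j, ‖v j‖ ^ 2 := by
  rw [re_trace_mul_conjTranspose, Finset.sum_mul]
  refine Finset.sum_le_sum fun i _ => ?_
  calc ‖(A *ᵥ v) i‖ ^ 2 ≤ (∑ j, ‖A i j‖ * ‖v j‖) ^ 2 := by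
        gcongr
        exact (norm_sum_le _ _).trans (Finset.sum_le_sum fun j _ => norm_mul_le _ _)
    _ ≤ (∑ j, ‖A i j‖ ^ 2) * ∑ j, ‖v j‖ ^ 2 := Finset.sum_mul_sq_le_sq_mul_sq _ _ _

end MatrixTrace

lemma Matrix.trace_eq_rank_of_isIdempotentElem {K n : Type*} [Field K] [Fintype n] [DecidableEq n]
    {Q : Matrix n n K} (hQ : IsIdempotentElem Q) : trace Q = Q.rank := by
  rw [← trace_toLin'_eq]
  exact (LinearMap.IsIdempotentElem.isProj_range _ (hQ.map toLinAlgEquiv')).trace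

lemma IsStarProjection.trace_mul_mul_conjTranspose {R n : Type*} [CommSemiring R] [StarRing R]
    [Fintype n] [DecidableEq n] {P Q : Matrix n n R} (hP : IsStarProjection P)
    (hQ : IsStarProjection Q) : trace (P * Q * (P * Q)ᴴ) = trace (P * Q) := by
  rw [conjTranspose_mul, ← star_eq_conjTranspose, ← star_eq_conjTranspose,
    hP.isSelfAdjoint.star_eq, hQ.isSelfAdjoint.star_eq, ← Matrix.mul_assoc, Matrix.mul_assoc P,
    hQ.isIdempotentElem.eq, trace_mul_cycle, hP.isIdempotentElem.eq]

open RCLike in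
lemma IsStarProjection.re_sum_star_mul_add_mulVec_le {𝕜 n : Type*} [RCLike 𝕜] [Fintype n]
    [DecidableEq n] {Q₀ Q₁ : Matrix n n 𝕜} (h₀ : IsStarProjection Q₀) (h₁ : IsStarProjection Q₁)
    {ψ : n → 𝕜} (hψ : ∑ i, ‖ψ i‖ ^ 2 = 1) :
    re (∑ i, star (ψ i) * ((Q₀ + Q₁) *ᵥ ψ) i) ≤ 1 + 2 * √(re (trace (Q₀ * Q₁))) := by
  have hx : ‖WithLp.toLp 2 ψ‖ = 1 := by simp [EuclideanSpace.norm_eq, hψ]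
  have key := (h₀.map (toEuclideanCLM (n := n) (𝕜 := 𝕜))).re_inner_add_apply_le
    (h₁.map (toEuclideanCLM (n := n) (𝕜 := 𝕜))) hx
  rw [← map_add, toEuclideanCLM_toLp, toEuclideanCLM_toLp, toEuclideanCLM_toLp,
    EuclideanSpace.inner_toLp_toLp, mulVec_mulVec] at key
  have hfrob : ‖WithLp.toLp 2 ((Q₀ * Q₁) *ᵥ ψ)‖ ≤ √(re (trace (Q₀ * Q₁))) := by
    refine Real.le_sqrt_of_sq_le ?_
    rw [EuclideanSpace.norm_sq_eq, ← h₀.trace_mul_mul_conjTranspose h₁]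
    simpa [hψ] using sum_norm_mulVec_sq_le (Q₀ * Q₁) ψ
  calc re (∑ i, star (ψ i) * ((Q₀ + Q₁) *ᵥ ψ) i) = re ((Q₀ + Q₁) *ᵥ ψ ⬝ᵥ star ψ) := by
        simp_rw [dotProduct, mul_comm]; rfl
    _ ≤ _ := by linarith

lemma Finset.card_filter_le_mul_le_sum {α R : Type*} [Semiring R] [PartialOrder R]
    [IsOrderedAddMonoid R] (s : Finset α) {f : α → R} (hf : ∀ x ∈ s, 0 ≤ f x) (t : R) :
    (s.filter fun x => t ≤ f x).card * t ≤ ∑ x ∈ s, f x :=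
  calc (s.filter fun x => t ≤ f x).card * t = ∑ _x ∈ s.filter fun x => t ≤ f x, t := by
        rw [sum_const, nsmul_eq_mul]
    _ ≤ ∑ x ∈ s.filter fun x => t ≤ f x, f x := sum_le_sum fun x hx => (mem_filter.1 hx).2
    _ ≤ ∑ x ∈ s, f x := sum_le_sum_of_subset_of_nonneg (filter_subset _ _) fun x hx _ => hf x hx

section Pauli

variable {m : ℕ} (a b : Fin m → ZMod 2) (M : Matrix (Fin m → ZMod 2) (Fin m → ZMod 2) ℂ)

lemma pauli_apply (i j : Fin m → ZMod 2) :
    pauli m a b i j = if j = i + a then walsh b j else 0 :=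
  if_congr eq_add_iff_eq_add_of_zmod_two rfl rfl

lemma pauli_mul_apply (i j : Fin m → ZMod 2) :
    (pauli m a b * M) i j = walsh b (i + a) * M (i + a) j := by
  simp [mul_apply, pauli_apply]

lemma mul_conjTranspose_pauli_apply (i j : Fin m → ZMod 2) :
    (M * (pauli m a b)ᴴ) i j = M i (j + a) * walsh b (j + a) := by
  simp [mul_apply, pauli_apply, apply_ite (starRingEnd ℂ), conj_walsh]

lemma pauli_conj_apply (i j : Fin m → ZMod 2) :
    (pauli m a b * M * (pauli m a b)ᴴ) i j
      = walsh b (i + a) * walsh b (j + a) * M (i + a) (j + a) := by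
  rw [mul_conjTranspose_pauli_apply, pauli_mul_apply]
  ring

lemma pauli_mem_unitaryGroup : pauli m a b ∈ unitaryGroup (Fin m → ZMod 2) ℂ := by
  rw [mem_unitaryGroup_iff, star_eq_conjTranspose]
  ext i j
  have h := pauli_conj_apply a b 1 i j
  rw [Matrix.mul_one] at h
  simp_rw [h, one_apply, add_left_inj]
  split_ifs with hij
  · rw [hij, walsh_mul_self, mul_one]
  · rw [mul_zero]

lemma sum_pauli_conj :
    ∑ p : (Fin m → ZMod 2) × (Fin m → ZMod 2), pauli m p.1 p.2 * M * (pauli m p.1 p.2)ᴴ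
      = ((2 : ℂ) ^ m * trace M) • 1 := by
  ext i j
  simp only [Matrix.sum_apply, Fintype.sum_prod_type, pauli_conj_apply, ← Finset.sum_mul,
    sum_walsh_mul_walsh, add_left_inj, Matrix.smul_apply, one_apply, Fintype.card_fin]
  split_ifs with h
  · subst h
    rw [smul_eq_mul, mul_one, trace, Finset.mul_sum]
    exact Fintype.sum_equiv (Equiv.addLeft i) _ _ fun a => rfl
  · simp

lemma sum_trace_mul_pauli_conj :
    ∑ p : (Fin m → ZMod 2) × (Fin m → ZMod 2),
        trace (M * (pauli m p.1 p.2 * M * (pauli m p.1 p.2)ᴴ))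
      = 2 ^ m * trace M ^ 2 := by
  rw [← trace_sum, ← Matrix.mul_sum, sum_pauli_conj, Matrix.mul_smul, Matrix.mul_one, trace_smul,
    smul_eq_mul]
  ring

end Pauli

lemma IsStarProjection.pauli_conj {m : ℕ} {Q : Matrix (Fin m → ZMod 2) (Fin m → ZMod 2) ℂ}
    (hQ : IsStarProjection Q) (a b : Fin m → ZMod 2) :
    IsStarProjection (pauli m a b * Q * (pauli m a b)ᴴ) :=
  hQ.map (Unitary.conjStarAlgAut ℂ _ ⟨pauli m a b, pauli_mem_unitaryGroup a b⟩)

lemma card_filter_le_re_trace_mul_pauli_conj_mul_le {m : ℕ}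
    {Q : Matrix (Fin m → ZMod 2) (Fin m → ZMod 2) ℂ} (hQ : IsStarProjection Q) (t : ℝ) :
    (Finset.univ.filter fun p : (Fin m → ZMod 2) × (Fin m → ZMod 2) =>
        t ≤ (trace (Q * (pauli m p.1 p.2 * Q * (pauli m p.1 p.2)ᴴ))).re).card * t
      ≤ 2 ^ m * Q.rank ^ 2 := by
  refine (Finset.univ.card_filter_le_mul_le_sum (fun p _ => ?_) t).trans_eq ?_
  · rw [← hQ.trace_mul_mul_conjTranspose (hQ.pauli_conj p.1 p.2), ← RCLike.re_to_complex,
      re_trace_mul_conjTranspose]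
    positivity
  · rw [← Complex.re_sum, sum_trace_mul_pauli_conj,
      trace_eq_rank_of_isIdempotentElem hQ.isIdempotentElem]
    norm_cast

lemma two_pow_mul_four_pow_le (m l : ℕ) :
    (2 : ℝ) ^ m * 4 ^ l ≤ ((2 : ℝ) ^ (-((m : ℝ) - 4 * l) / 3)) ^ 3 * 4 ^ m := by
  have h4 (k : ℕ) : (4 : ℝ) ^ k = 2 ^ (2 * (k : ℝ)) := by
    rw [Real.rpow_mul zero_le_two]; norm_num
  rw [h4, h4, ← Real.rpow_natCast, ← Real.rpow_natCast, ← Real.rpow_mul zero_le_two,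
    ← Real.rpow_add two_pos, ← Real.rpow_add two_pos]
  exact Real.rpow_le_rpow_of_exponent_le one_le_two
    (by push_cast; linarith [(l.cast_nonneg : (0 : ℝ) ≤ l)])

/-- For a projector `Π₀` of rank at most `2^λ`, `Π₁ = P Π₀ P†`, and
`p = ‖Π₀ + Π₁‖` the operator norm (= the max of the quadratic form over unit
vectors), the probability over a uniformly random `m`-qubit Pauli `P` that
`p ≥ 1 + 3·2^{−(m−4λ)/3}` is at most `2^{−(m−4λ)/3}`. -/
theorem pauli_projector_opnorm_tail (m lam : ℕ)
    (Q0 : Matrix (Fin m → ZMod 2) (Fin m → ZMod 2) ℂ)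
    (hproj : Q0 * Q0 = Q0) (hherm : Q0.IsHermitian) (hrank : Q0.rank ≤ 2 ^ lam) :
    ((Finset.filter (fun p : (Fin m → ZMod 2) × (Fin m → ZMod 2) =>
        ∃ ψ : (Fin m → ZMod 2) → ℂ, (∑ i, ‖ψ i‖ ^ 2 = 1) ∧
          1 + 3 * (2 : ℝ) ^ (-((m : ℝ) - 4 * lam) / 3)
            ≤ (∑ i, star (ψ i) *
                (Q0 + pauli m p.1 p.2 * Q0 * (pauli m p.1 p.2)ᴴ).mulVec ψ i).re)
      Finset.univ).card : ℝ) / 4 ^ m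
    ≤ (2 : ℝ) ^ (-((m : ℝ) - 4 * lam) / 3) := by
  set ε := (2 : ℝ) ^ (-((m : ℝ) - 4 * lam) / 3)
  have hε : 0 < ε := by positivity
  have hQ : IsStarProjection Q0 := ⟨hproj, hherm⟩
  have hrank_sq : (Q0.rank : ℝ) ^ 2 ≤ 4 ^ lam :=
    calc (Q0.rank : ℝ) ^ 2 ≤ ((2 : ℝ) ^ lam) ^ 2 := by gcongr; exact_mod_cast hrank
      _ = 4 ^ lam := by rw [← pow_mul, mul_comm, pow_mul]; norm_num
  rw [div_le_iff₀ (by positivity)]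
  refine le_of_mul_le_mul_right ?_ (pow_pos hε 2)
  calc _ ≤ ((Finset.univ.filter fun p : (Fin m → ZMod 2) × (Fin m → ZMod 2) =>
          ε ^ 2 ≤ (trace (Q0 * (pauli m p.1 p.2 * Q0 * (pauli m p.1 p.2)ᴴ))).re).card : ℝ)
          * ε ^ 2 := by
        gcongr ?_ * _
        refine mod_cast Finset.card_le_card
          (Finset.monotone_filter_right _ fun p _ ⟨ψ, hψ, hle⟩ => ?_)
        have h := hQ.re_sum_star_mul_add_mulVec_le (hQ.pauli_conj p.1 p.2) hψ
        simp only [RCLike.re_to_complex] at h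
        exact (Real.le_sqrt' hε).1 (by linarith)
    _ ≤ 2 ^ m * Q0.rank ^ 2 := card_filter_le_re_trace_mul_pauli_conj_mul_le hQ _
    _ ≤ 2 ^ m * 4 ^ lam := by gcongr
    _ ≤ ε ^ 3 * 4 ^ m := two_pow_mul_four_pow_le m lam
    _ = ε * 4 ^ m * ε ^ 2 := by ring
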